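/- Let G = PSL(2,ℝ) × PSL(2,ℝ) and let A be the maximal diagonal subgroup of G. If F is a closed connected subgroup of G strictly containing A, then F contains at least one of the four unipotent root subgroups U₁⁺ = {(±(1 t; 0 1), 1) : t ∈ ℝ}, U₁⁻ = {(±(1 0; t 1), 1) : t ∈ ℝ}, U₂⁺ = {(1, ±(1 t; 0 1)) : t ∈ ℝ}, U₂⁻ = {(1, ±(1 0; t 1)) : t ∈ ℝ}. -/

import Mathlib

noncomputable section

open Matrix MatrixGroups MeasureTheory Filter Topology OnePoint
open scoped UpperHalfPlane

/-- `SL(2, ℝ)`. -/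
abbrev SL2 : Type := Matrix.SpecialLinearGroup (Fin 2) ℝ

/-- `PSL(2, ℝ) = SL(2, ℝ)/{±1}`, the quotient of `SL(2, ℝ)` by its center. -/
abbrev PSL2 : Type := Matrix.ProjectiveSpecialLinearGroup (Fin 2) ℝ

/-- Topology on `SL(2, ℝ)`, induced from the space of matrices. -/
instance : TopologicalSpace SL2 :=
  TopologicalSpace.induced (fun g : SL2 => (g : Matrix (Fin 2) (Fin 2) ℝ)) inferInstance

/-- The quotient topology on `PSL(2, ℝ)`. -/
instance : TopologicalSpace PSL2 := instTopologicalSpaceQuotient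

instance : MeasurableSpace PSL2 := borel PSL2

/-- The group `G = PSL(2, ℝ) × PSL(2, ℝ)`. -/
abbrev G2 : Type := PSL2 × PSL2

/-- The projection `SL(2, ℝ) → PSL(2, ℝ)`. -/
def pr : SL2 →* PSL2 := QuotientGroup.mk' (Subgroup.center SL2)

/-- A representative in `SL(2, ℝ)` of an element of `PSL(2, ℝ)`.  (All the constructions
below built from `rep` are in fact independent of the choice of representative, because the
two lifts of an element of `PSL(2, ℝ)` differ only by sign.) -/
def rep (x : PSL2) : SL2 := Quotient.out x

/-- The boundary `∂ℍ = ℝ ∪ {∞}` of the upper half-plane. -/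
abbrev Bdry : Type := OnePoint ℝ

/-- The extended Möbius action of `SL(2, ℝ)` on `∂ℍ = ℝ ∪ {∞}`. -/
def mobSL (g : SL2) (p : Bdry) : Bdry :=
  p.elim (if g 1 0 = 0 then ∞ else ((g 0 0 / g 1 0 : ℝ) : Bdry))
    (fun x => if g 1 0 * x + g 1 1 = 0 then ∞
      else (((g 0 0 * x + g 0 1) / (g 1 0 * x + g 1 1) : ℝ) : Bdry))

/-- The extended Möbius action of `PSL(2, ℝ)` on the boundary `∂ℍ = ℝ ∪ {∞}`
(independent of the choice of representative, since `-g` and `g` act alike). -/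
def mob (x : PSL2) (p : Bdry) : Bdry := mobSL (rep x) p

/-- The Möbius action of `PSL(2, ℝ)` on the upper half-plane `ℍ`
(independent of the choice of representative, since `-g` and `g` act alike). -/
def hact (x : PSL2) (z : ℍ) : ℍ := rep x • z

/-- The componentwise action of `G` on `ℍ × ℍ`. -/
def hact2 (x : G2) (z : ℍ × ℍ) : ℍ × ℍ := (hact x.1 z.1, hact x.2 z.2)

/-- The componentwise action of `G` on the Furstenberg boundary `F = ∂ℍ × ∂ℍ`. -/
def mob2 (x : G2) (ξ : Bdry × Bdry) : Bdry × Bdry := (mob x.1 ξ.1, mob x.2 ξ.2)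

/-- The diagonal matrix `diag (exp t, exp (-t))` in `SL(2, ℝ)`; as `t` ranges over `ℝ`,
these (together with their negatives) are exactly the diagonal matrices `±diag (λ, λ⁻¹)`
with `λ > 0`. -/
def dm (t : ℝ) : SL2 :=
  ⟨!![Real.exp t, 0; 0, Real.exp (-t)], by
    simp [Matrix.det_fin_two_of, ← Real.exp_add]⟩

lemma dm_mul (t s : ℝ) : dm t * dm s = dm (t + s) := by
  apply Subtype.ext
  rw [Matrix.SpecialLinearGroup.coe_mul]
  simp only [dm, Matrix.SpecialLinearGroup.coe_mul]
  rw [Matrix.mul_fin_two]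
  norm_num [← Real.exp_add]
  ring_nf

lemma dm_zero : dm 0 = 1 := by
  apply Subtype.ext
  simp [dm, Matrix.one_fin_two]

/-- The maximal diagonal subgroup `A` of `G = PSL(2, ℝ) × PSL(2, ℝ)`. -/
def Adiag : Subgroup G2 where
  carrier := {x | ∃ t s : ℝ, x = (pr (dm t), pr (dm s))}
  mul_mem' := by
    rintro _ _ ⟨t, s, rfl⟩ ⟨t', s', rfl⟩
    exact ⟨t + t', s + s', by simp [Prod.ext_iff, ← _root_.map_mul, dm_mul]⟩
  one_mem' := ⟨0, 0, by simp [dm_zero, Prod.ext_iff]⟩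
  inv_mem' := by
    rintro _ ⟨t, s, rfl⟩
    refine ⟨-t, -s, ?_⟩
    have h1 : dm (-t) * dm t = 1 := by rw [dm_mul]; simpa using dm_zero
    have h2 : dm (-s) * dm s = 1 := by rw [dm_mul]; simpa using dm_zero
    simp [Prod.ext_iff, eq_comm, eq_inv_iff_mul_eq_one, ← _root_.map_mul, h1, h2]

/-- The diagonal sub-semigroup `A⁺` of `G` (diagonal entries `λᵢ = exp tᵢ ≥ 1`). -/
def Apos : Set G2 := {x | ∃ t s : ℝ, 0 ≤ t ∧ 0 ≤ s ∧ x = (pr (dm t), pr (dm s))}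

/-- The absolute value of the trace, well defined on `PSL(2, ℝ)`. -/
def trAbs (x : PSL2) : ℝ := |((rep x : Matrix (Fin 2) (Fin 2) ℝ)).trace|

/-- An element of `PSL(2, ℝ)` is hyperbolic if `|trace| > 2`. -/
def IsHyperbolicPSL (x : PSL2) : Prop := 2 < trAbs x

/-- An element of `PSL(2, ℝ)` is parabolic if it is nontrivial and `|trace| = 2`. -/
def IsParabolicPSL (x : PSL2) : Prop := x ≠ 1 ∧ trAbs x = 2

/-- An element of `PSL(2, ℝ)` is elliptic if `|trace| < 2`. -/
def IsEllipticPSL (x : PSL2) : Prop := trAbs x < 2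

/-- The dominant eigenvalue `(|tr| + √(tr² - 4))/2` of (a lift of) an element of
`PSL(2, ℝ)`; for a hyperbolic element this is its dominant (> 1) eigenvalue. -/
def domEig (x : PSL2) : ℝ := (trAbs x + Real.sqrt (trAbs x ^ 2 - 4)) / 2

/-- An element of `G` is hyperbolic if both components are. -/
def IsHyperbolicG (γ : G2) : Prop := IsHyperbolicPSL γ.1 ∧ IsHyperbolicPSL γ.2

/-- An element of `G` is parabolic if both components are. -/
def IsParabolicG (γ : G2) : Prop := IsParabolicPSL γ.1 ∧ IsParabolicPSL γ.2

/-- An element of `G` is elliptic if both components are. -/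
def IsEllipticG (γ : G2) : Prop := IsEllipticPSL γ.1 ∧ IsEllipticPSL γ.2

/-- A nontrivial element of `G` is mixed if its two components are not of the same kind. -/
def IsMixed (γ : G2) : Prop :=
  γ ≠ 1 ∧ ¬ IsHyperbolicG γ ∧ ¬ IsParabolicG γ ∧ ¬ IsEllipticG γ

/-- A hyperbolic element of `G` is hyper-regular if the dominant eigenvalues of its two
components are distinct. -/
def IsHyperRegular (γ : G2) : Prop := IsHyperbolicG γ ∧ domEig γ.1 ≠ domEig γ.2

/-- `Γ` is an irreducible lattice of `G = PSL(2, ℝ) × PSL(2, ℝ)`: it is discrete, of finite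
covolume for Haar measure, both coordinate projections have dense image, and `Γ` meets the
kernel of each coordinate projection trivially. -/
structure IsIrreducibleLattice (Γ : Subgroup G2) : Prop where
  discrete : DiscreteTopology Γ
  finiteCovolume : ∃ μ : Measure G2, μ.IsHaarMeasure ∧
    ∃ s : Set G2, IsFundamentalDomain Γ s μ ∧ μ s < ⊤
  dense_fst : Dense (Prod.fst '' (Γ : Set G2))
  dense_snd : Dense (Prod.snd '' (Γ : Set G2))
  ker_fst : ∀ γ ∈ Γ, γ.1 = 1 → γ = 1
  ker_snd : ∀ γ ∈ Γ, γ.2 = 1 → γ = 1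

/-- The quotient `Γ \ G` by right cosets, with the quotient topology. -/
abbrev RQ (Γ : Subgroup G2) : Type := Quotient (QuotientGroup.rightRel Γ)

/-- The class `Γ g` of `g` in `Γ \ G`. -/
def rmk (Γ : Subgroup G2) (g : G2) : RQ Γ := Quotient.mk (QuotientGroup.rightRel Γ) g

/-- The orbit `x A` of `x = Γ g` in `Γ \ G` under right translation by `A`. -/
def orbA (Γ : Subgroup G2) (g : G2) : Set (RQ Γ) := {y | ∃ a ∈ Adiag, y = rmk Γ (g * a)}

/-- The semi-orbit `x A⁺` of `x = Γ g` in `Γ \ G` under right translation by `A⁺`. -/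
def orbApos (Γ : Subgroup G2) (g : G2) : Set (RQ Γ) := {y | ∃ a ∈ Apos, y = rmk Γ (g * a)}

/-- The inclusion `ℍ ⊆ ℂ ∪ {∞}` into the one-point compactification of `ℂ`. -/
def hToC (z : ℍ) : OnePoint ℂ := ((z : ℂ) : OnePoint ℂ)

/-- The inclusion `∂ℍ = ℝ ∪ {∞} ⊆ ℂ ∪ {∞}`. -/
def bToC (p : Bdry) : OnePoint ℂ := OnePoint.map (fun x : ℝ => (x : ℂ)) p

/-- The upper unipotent matrix `(1, t; 0, 1)` in `SL(2, ℝ)`. -/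
def u1 (t : ℝ) : SL2 := ⟨!![1, t; 0, 1], by simp [Matrix.det_fin_two_of]⟩

/-- The lower unipotent matrix `(1, 0; t, 1)` in `SL(2, ℝ)`. -/
def l1 (t : ℝ) : SL2 := ⟨!![1, 0; t, 1], by simp [Matrix.det_fin_two_of]⟩

/-- The unipotent root subgroup `U₁⁺ = {(±(1, t; 0, 1), 1)}` of `G`, as a set. -/
def U1p : Set G2 := {x | ∃ t : ℝ, x = (pr (u1 t), 1)}

/-- The unipotent root subgroup `U₁⁻ = {(±(1, 0; t, 1), 1)}` of `G`, as a set. -/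
def U1m : Set G2 := {x | ∃ t : ℝ, x = (pr (l1 t), 1)}

/-- The unipotent root subgroup `U₂⁺ = {(1, ±(1, t; 0, 1))}` of `G`, as a set. -/
def U2p : Set G2 := {x | ∃ t : ℝ, x = (1, pr (u1 t))}

/-- The unipotent root subgroup `U₂⁻ = {(1, ±(1, 0; t, 1))}` of `G`, as a set. -/
def U2m : Set G2 := {x | ∃ t : ℝ, x = (1, pr (l1 t))}

/-!
Near the identity every element of `G` can be moved by `A` into the product of root subgroups
`U₁⁻U₁⁺ × U₂⁻U₂⁺`, with small coordinates `v ∈ ℝ⁴`. Since `F` is connected and strictly larger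
than `A`, the subgroup `A` is not open in `F`, so `F` meets this chart in points `v ≠ 0`
arbitrarily close to `0`. Conjugation by `A` rescales the coordinates by `(p, p⁻¹, q, q⁻¹)`:
blowing up the largest coordinate of such a `v` to `±1` leaves the others small, so, `F` being
closed, it contains the point `±eᵢ` of one of the four root subgroups. Rescaling once more and
inverting then sweeps out that whole root subgroup.
-/

instance : IsTopologicalGroup SL2 := Matrix.SpecialLinearGroup.topologicalGroup

theorem Subgroup.exists_mem_nhds_one_notMem_of_lt {G : Type*} [Group G] [TopologicalSpace G]
    [IsTopologicalGroup G] {H K : Subgroup G} (hK : IsConnected (K : Set G)) (hHK : H < K)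
    {U : Set G} (hU : U ∈ 𝓝 1) : ∃ g ∈ K, g ∈ U ∧ g ∉ H := by
  by_contra! hUH
  have : ConnectedSpace K := isConnected_iff_connectedSpace.mp hK
  have hopen : IsOpen (H.subgroupOf K : Set K) :=
    Subgroup.isOpen_of_mem_nhds _ (g := 1) <| Filter.mem_of_superset
      (continuous_subtype_val.continuousAt.preimage_mem_nhds hU) fun g hg => hUH g g.2 hg
  rcases isClopen_iff.mp ⟨Subgroup.isClosed_of_isOpen _ hopen, hopen⟩ with h | h
  · exact (Set.eq_empty_iff_forall_notMem.mp h) 1 (Subgroup.one_mem _)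
  · exact hHK.not_ge fun g hg => Set.eq_univ_iff_forall.mp h ⟨g, hg⟩

open Metric in
theorem exists_single_mem_of_rescaling {ι : Type*} [Fintype ι] [DecidableEq ι]
    {S : Set (ι → ℝ)} (hS : IsClosed S) (hsmall : ∀ ε > 0, ∃ v ∈ S, v ≠ 0 ∧ ‖v‖ < ε)
    (hscale : ∀ v ∈ S, ∀ i, ∀ c : ℝ, 1 ≤ c →
      ∃ w : ι → ℝ, w i = c ∧ (∀ j ≠ i, |w j| ≤ 1) ∧ w * v ∈ S) :
    ∃ i, ∃ σ : ℝ, |σ| = 1 ∧ Pi.single i σ ∈ S := by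
  by_contra! hK
  -- `S` keeps a positive distance from the compact set `K` of unit vectors on the axes, but
  -- rescaling a small `v ∈ S` so that its largest coordinate becomes `±1` lands close to `K`.
  set K : Set (ι → ℝ) := ⋃ i, Pi.single i '' sphere 0 1
  have hKc : IsCompact K :=
    isCompact_iUnion fun i => (isCompact_sphere 0 1).image (continuous_single (A := fun _ => ℝ) i)
  have hKS : Disjoint K S := by
    refine Set.disjoint_iUnion_left.mpr fun i => Set.disjoint_image_left.mpr ?_
    exact Set.disjoint_left.mpr fun σ hσ => hK i σ (by simpa using hσ)
  obtain ⟨δ, hδ, hdisj⟩ := hKS.exists_cthickenings hKc hS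
  obtain ⟨v, hvS, hv0, hvδ⟩ := hsmall (min δ 1) (by positivity)
  have : Nonempty ι := (Function.ne_iff.mp hv0).nonempty
  obtain ⟨i, hi⟩ := Finite.exists_max fun j => |v j|
  have hvi : 0 < |v i| := by
    by_contra! h
    exact hv0 (funext fun j => abs_nonpos_iff.mp ((hi j).trans h))
  have hviδ : |v i| < min δ 1 := (norm_le_pi_norm v i).trans_lt hvδ
  obtain ⟨w, hwi, hwj, hwS⟩ :=
    hscale v hvS i |v i|⁻¹ ((one_le_inv₀ hvi).mpr (hviδ.le.trans (min_le_right _ _)))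
  have hK' : Pi.single i ((w * v) i) ∈ K :=
    Set.mem_iUnion_of_mem i ⟨_, by simp [hwi, hvi.ne'], rfl⟩
  have hdist : dist (w * v) (Pi.single i ((w * v) i)) ≤ δ := by
    refine (dist_pi_le_iff hδ.le).mpr fun j => ?_
    rcases eq_or_ne j i with rfl | hj
    · simpa using hδ.le
    · calc dist _ _ = |w j| * |v j| := by simp [Pi.single_eq_of_ne hj]
        _ ≤ 1 * |v i| := mul_le_mul (hwj j hj) (hi j) (abs_nonneg _) zero_le_one
        _ ≤ δ := by linarith [min_le_left δ 1]
  exact Set.disjoint_left.mp hdisj (mem_cthickening_of_dist_le _ _ δ K hK' hdist)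
    (self_subset_cthickening S hwS)

lemma u1_zero : u1 0 = 1 := by
  ext i j; fin_cases i <;> fin_cases j <;> simp [u1]

lemma l1_zero : l1 0 = 1 := by
  ext i j; fin_cases i <;> fin_cases j <;> simp [l1]

lemma u1_mul (x y : ℝ) : u1 x * u1 y = u1 (x + y) := by
  ext i j
  simp only [Matrix.SpecialLinearGroup.coe_mul]
  fin_cases i <;> fin_cases j <;> simp [u1, add_comm]

lemma l1_mul (x y : ℝ) : l1 x * l1 y = l1 (x + y) := by
  ext i j
  simp only [Matrix.SpecialLinearGroup.coe_mul]
  fin_cases i <;> fin_cases j <;> simp [l1]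

lemma dm_inv (t : ℝ) : (dm t)⁻¹ = dm (-t) :=
  inv_eq_of_mul_eq_one_right (by rw [dm_mul, add_neg_cancel, dm_zero])

lemma dm_mul_l1_mul_u1_mul_dm_inv (t x y : ℝ) :
    dm t * (l1 x * u1 y) * (dm t)⁻¹ =
      l1 (Real.exp (-2 * t) * x) * u1 (Real.exp (2 * t) * y) := by
  rw [dm_inv]
  ext i j
  simp only [Matrix.SpecialLinearGroup.coe_mul]
  fin_cases i <;> fin_cases j <;>
    simp [dm, l1, u1, Real.exp_neg, two_mul, Real.exp_add] <;> field_simp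

lemma mul_dm_neg_log_eq_l1_mul_u1 (m : SL2) (hm : 0 < m 0 0) :
    m * dm (-Real.log (m 0 0)) = l1 (m 1 0 / m 0 0) * u1 (m 0 1 * m 0 0) := by
  have hdet := m.det_coe
  rw [Matrix.det_fin_two] at hdet
  ext i j
  simp only [Matrix.SpecialLinearGroup.coe_mul]
  fin_cases i <;> fin_cases j <;>
    simp [dm, l1, u1, Matrix.mul_apply, Real.exp_neg, Real.exp_log hm]
  all_goals field_simp
  linarith

lemma SL2.eventually_exists_mul_dm_eq {ε : ℝ} (hε : 0 < ε) :
    ∀ᶠ m in 𝓝 (1 : SL2), ∃ t x y, |x| < ε ∧ |y| < ε ∧ m * dm t = l1 x * u1 y := by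
  have hentry : ∀ i j, Continuous fun m : SL2 => m i j := by
    intro i j; fun_prop
  have h00 : ContinuousAt (fun m : SL2 => m 0 0) 1 := (hentry 0 0).continuousAt
  have hpos : ∀ᶠ m : SL2 in 𝓝 1, 0 < m 0 0 := h00.eventually (lt_mem_nhds (by simp))
  have hx : ∀ᶠ m : SL2 in 𝓝 1, |m 1 0 / m 0 0| < ε :=
    (((hentry 1 0).continuousAt.div h00 (by simp)).abs).eventually (gt_mem_nhds (by simpa))
  have hy : ∀ᶠ m : SL2 in 𝓝 1, |m 0 1 * m 0 0| < ε :=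
    (((hentry 0 1).continuousAt.mul h00).abs).eventually (gt_mem_nhds (by simpa))
  filter_upwards [hpos, hx, hy] with m hm hx hy
  exact ⟨_, _, _, hx, hy, mul_dm_neg_log_eq_l1_mul_u1 m hm⟩

lemma PSL2.eventually_exists_mul_dm_eq {ε : ℝ} (hε : 0 < ε) :
    ∀ᶠ g in 𝓝 (1 : PSL2), ∃ t x y, |x| < ε ∧ |y| < ε ∧ g * pr (dm t) = pr (l1 x * u1 y) := by
  rw [← pr.map_one, show pr 1 = ((1 : SL2) : PSL2) from rfl, QuotientGroup.nhds_eq,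
    Filter.eventually_map]
  filter_upwards [SL2.eventually_exists_mul_dm_eq hε] with m ⟨t, x, y, hx, hy, h⟩
  exact ⟨t, x, y, hx, hy, by rw [← h]; rfl⟩

/-- Coordinates `(x₁, y₁, x₂, y₂)` on the big cell `U₁⁻U₁⁺ × U₂⁻U₂⁺` of `G`. -/
def rootChart (v : Fin 4 → ℝ) : G2 := (pr (l1 (v 0) * u1 (v 1)), pr (l1 (v 2) * u1 (v 3)))

def rootWeight (t s : ℝ) : Fin 4 → ℝ :=
  ![Real.exp (-2 * t), Real.exp (2 * t), Real.exp (-2 * s), Real.exp (2 * s)]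

lemma continuous_rootChart : Continuous rootChart := by
  have hu : Continuous u1 := continuous_induced_rng.2 (by fun_prop)
  have hl : Continuous l1 := continuous_induced_rng.2 (by fun_prop)
  have hpr : Continuous pr := QuotientGroup.continuous_mk
  unfold rootChart
  fun_prop

lemma rootChart_zero : rootChart 0 = 1 := by
  simp [rootChart, u1_zero, l1_zero]

lemma rootChart_single_add (i : Fin 4) (x y : ℝ) :
    rootChart (Pi.single i x) * rootChart (Pi.single i y) = rootChart (Pi.single i (x + y)) := by
  fin_cases i <;> simp [rootChart, u1_zero, l1_zero, ← map_mul, u1_mul, l1_mul]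

lemma rootChart_single_neg (i : Fin 4) (x : ℝ) :
    rootChart (Pi.single i (-x)) = (rootChart (Pi.single i x))⁻¹ :=
  (inv_eq_of_mul_eq_one_right <| by
    rw [rootChart_single_add, add_neg_cancel, Pi.single_zero, rootChart_zero]).symm

lemma range_rootChart_single (i : Fin 4) :
    Set.range (fun x => rootChart (Pi.single i x)) = ![U1m, U1p, U2m, U2p] i := by
  fin_cases i <;> ext g <;> simp [rootChart, u1_zero, l1_zero, U1m, U1p, U2m, U2p, eq_comm]

lemma rootChart_rootWeight_mul (t s : ℝ) (v : Fin 4 → ℝ) :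
    rootChart (rootWeight t s * v) =
      (pr (dm t), pr (dm s)) * rootChart v * (pr (dm t), pr (dm s))⁻¹ := by
  simp [rootChart, rootWeight, ← map_mul, ← map_inv, dm_mul_l1_mul_u1_mul_dm_inv]

lemma exists_rootWeight_eq (i : Fin 4) {c : ℝ} (hc : 0 < c) :
    ∃ t s, rootWeight t s i = c ∧ ∀ j ≠ i, rootWeight t s j = 1 ∨ rootWeight t s j = c⁻¹ := by
  have h : Real.exp (2 * (Real.log c / 2)) = c := by
    rw [mul_div_cancel₀ _ two_ne_zero, Real.exp_log hc]
  fin_cases i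
  · refine ⟨-(Real.log c / 2), 0, by simp [rootWeight, h], fun j hj => ?_⟩
    fin_cases j <;> simp_all [rootWeight, Real.exp_neg]
  · refine ⟨Real.log c / 2, 0, by simp [rootWeight, h], fun j hj => ?_⟩
    fin_cases j <;> simp_all [rootWeight, Real.exp_neg]
  · refine ⟨0, -(Real.log c / 2), by simp [rootWeight, h], fun j hj => ?_⟩
    fin_cases j <;> simp_all [rootWeight, Real.exp_neg]
  · refine ⟨0, Real.log c / 2, by simp [rootWeight, h], fun j hj => ?_⟩
    fin_cases j <;> simp_all [rootWeight, Real.exp_neg]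

section

variable {F : Subgroup G2}

lemma eventually_exists_mul_mem_Adiag_eq_rootChart {ε : ℝ} (hε : 0 < ε) :
    ∀ᶠ g in 𝓝 (1 : G2), ∃ a ∈ Adiag, ∃ v, ‖v‖ < ε ∧ g * a = rootChart v := by
  rw [← Prod.mk_one_one]
  filter_upwards [(PSL2.eventually_exists_mul_dm_eq hε).prod_nhds
    (PSL2.eventually_exists_mul_dm_eq hε)]
    with g ⟨⟨t, x₁, y₁, hx₁, hy₁, h₁⟩, ⟨s, x₂, y₂, hx₂, hy₂, h₂⟩⟩
  refine ⟨(pr (dm t), pr (dm s)), ⟨t, s, rfl⟩, ![x₁, y₁, x₂, y₂], ?_, Prod.ext h₁ h₂⟩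
  refine (pi_norm_lt_iff hε).mpr fun i => ?_
  fin_cases i <;> simpa

lemma exists_rootChart_mem_ne_zero (hFconn : IsConnected (F : Set G2)) (hAF : Adiag < F)
    {ε : ℝ} (hε : 0 < ε) : ∃ v, rootChart v ∈ F ∧ v ≠ 0 ∧ ‖v‖ < ε := by
  obtain ⟨g, hgF, ⟨a, haA, v, hv, hgv⟩, hgA⟩ :=
    Subgroup.exists_mem_nhds_one_notMem_of_lt hFconn hAF
      (eventually_exists_mul_mem_Adiag_eq_rootChart hε)
  refine ⟨v, hgv ▸ F.mul_mem hgF (hAF.le haA), ?_, hv⟩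
  rintro rfl
  rw [rootChart_zero, mul_eq_one_iff_eq_inv] at hgv
  exact hgA (hgv ▸ Adiag.inv_mem haA)

lemma rootChart_rootWeight_mul_mem (hAF : Adiag ≤ F) {v : Fin 4 → ℝ}
    (hv : rootChart v ∈ F) (t s : ℝ) : rootChart (rootWeight t s * v) ∈ F := by
  have ha : ((pr (dm t), pr (dm s)) : G2) ∈ F := hAF ⟨t, s, rfl⟩
  rw [rootChart_rootWeight_mul]
  exact F.mul_mem (F.mul_mem ha hv) (F.inv_mem ha)

lemma exists_rescale_rootChart_mem (hAF : Adiag ≤ F) {v : Fin 4 → ℝ}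
    (hv : rootChart v ∈ F) (i : Fin 4) {c : ℝ} (hc : 1 ≤ c) :
    ∃ w : Fin 4 → ℝ, w i = c ∧ (∀ j ≠ i, |w j| ≤ 1) ∧ rootChart (w * v) ∈ F := by
  obtain ⟨t, s, hi, hj⟩ := exists_rootWeight_eq i (zero_lt_one.trans_le hc)
  refine ⟨rootWeight t s, hi, fun j hji => ?_, rootChart_rootWeight_mul_mem hAF hv t s⟩
  rcases hj j hji with h | h <;>
    simp [h, abs_inv, abs_of_pos (zero_lt_one.trans_le hc), inv_le_one_of_one_le₀ hc]

lemma rootChart_single_mem (hAF : Adiag ≤ F) {i : Fin 4} {σ : ℝ} (hσ : σ ≠ 0)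
    (h : rootChart (Pi.single i σ) ∈ F) (x : ℝ) : rootChart (Pi.single i x) ∈ F := by
  have hscale : ∀ σ, rootChart (Pi.single i σ) ∈ F → ∀ c : ℝ, 0 < c →
      rootChart (Pi.single i (c * σ)) ∈ F := by
    intro σ h c hc
    obtain ⟨t, s, hi, -⟩ := exists_rootWeight_eq i hc
    simpa [← hi, Pi.single_mul_right] using rootChart_rootWeight_mul_mem hAF h t s
  obtain rfl | hx := eq_or_ne x 0
  · simp [rootChart_zero, F.one_mem]
  rcases (div_ne_zero hx hσ).lt_or_gt with hneg | hpos
  · have := hscale (-σ) (rootChart_single_neg i σ ▸ F.inv_mem h) (-(x / σ)) (neg_pos.mpr hneg)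
    rwa [neg_mul_neg, div_mul_cancel₀ x hσ] at this
  · simpa [div_mul_cancel₀ x hσ] using hscale σ h (x / σ) hpos

end

/-- Every closed connected subgroup of `G = PSL(2, ℝ) × PSL(2, ℝ)` strictly containing the
maximal diagonal subgroup `A` contains one of the four unipotent root subgroups
`U₁⁺, U₁⁻, U₂⁺, U₂⁻`. -/
theorem unipotent_subgroup_of_closed_connected_gt_Adiag
    (F : Subgroup G2) (hFclosed : IsClosed (F : Set G2))
    (hFconn : IsConnected (F : Set G2)) (hAF : Adiag < F) :
    U1p ⊆ (F : Set G2) ∨ U1m ⊆ (F : Set G2) ∨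
      U2p ⊆ (F : Set G2) ∨ U2m ⊆ (F : Set G2) := by
  obtain ⟨i, σ, hσ, hmem⟩ := exists_single_mem_of_rescaling (S := {v | rootChart v ∈ F})
    (hFclosed.preimage continuous_rootChart)
    (fun ε hε => exists_rootChart_mem_ne_zero hFconn hAF hε)
    (fun v hv i c hc => exists_rescale_rootChart_mem hAF.le hv i hc)
  have hU : ![U1m, U1p, U2m, U2p] i ⊆ F := by
    rw [← range_rootChart_single]
    rintro _ ⟨x, rfl⟩
    exact rootChart_single_mem hAF.le (by rintro rfl; simp at hσ) hmem x
  fin_cases i <;> simp_all
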